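/- arXiv:2506.09051 — 2 statements merged into one kernel-verified Lean document; each statement's English description precedes it below -/
import Mathlib

section
/- Let I = ⟨x_{i_1}, x_{i_2}^{a_2}, x_{i_3}^{a_3}⟩ with 1 ≤ a_2 ≤ a_3 (so a_1 = 1). Then for all n ≥ 1, v(\overline{I^n}) = n + a_2 + ⌈a_3/a_2⌉ − 3. -/
open MvPolynomial Ideal

/-- The integral closure of an ideal. -/
noncomputable def intClosure {R : Type*} [CommRing R] (I : Ideal R) : Ideal R :=
  Ideal.span {x : R | ∃ n : ℕ, 0 < n ∧ ∃ c : ℕ → R,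
    (∀ i ∈ Finset.Icc 1 n, c i ∈ I ^ i) ∧
    x ^ n + ∑ i ∈ Finset.Icc 1 n, c i * x ^ (n - i) = 0}

/-- The v-number of a homogeneous ideal `J`. -/
noncomputable def vnumber {K : Type*} [Field K] {σ : Type*}
    (J : Ideal (MvPolynomial σ K)) : ℕ :=
  sInf {d : ℕ | ∃ f : MvPolynomial σ K, f.IsHomogeneous d ∧
    Submodule.colon J (Ideal.span {f}) ∈
      associatedPrimes (MvPolynomial σ K) (MvPolynomial σ K ⧸ J)}

/-- `⌈m a₂ / a₁⌉ − 1`, the exponent of the second variable in `f_m`. -/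
noncomputable def expTwo (a1 a2 m : ℕ) : ℕ := (⌈((m : ℚ) * a2) / a1⌉ - 1).toNat

/-- `⌈(a₃/a₂)(m a₂/a₁ − ⌈m a₂/a₁⌉ + 1)⌉ − 1`, the exponent of the third variable in `f_m`. -/
noncomputable def expThree (a1 a2 a3 m : ℕ) : ℕ :=
  (⌈((a3 : ℚ) / a2) * (((m : ℚ) * a2) / a1 - ⌈((m : ℚ) * a2) / a1⌉ + 1)⌉ - 1).toNat

/-- The exponent vector of the monomial
`f_m = x_{i_1}^{a_1−m} x_{i_2}^{⌈m a₂/a₁⌉−1} x_{i_3}^{⌈(a₃/a₂)(m a₂/a₁−⌈m a₂/a₁⌉+1)⌉−1}`. -/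
noncomputable def fExp {σ : Type*} (i1 i2 i3 : σ) (a1 a2 a3 m : ℕ) : σ →₀ ℕ :=
  Finsupp.single i1 (a1 - m) + Finsupp.single i2 (expTwo a1 a2 m)
    + Finsupp.single i3 (expThree a1 a2 a3 m)

/-!
Give `x_{i_1}, x_{i_2}, x_{i_3}` the weights `a₂a₃, a₃, a₂`, so that the three generators of `I`
all have weight `a₂a₃`. The least weight `ν` of a monomial in the support is additive on
products, so the ideals `{ν ≥ t}` are integrally closed and `{ν ≥ 1}` is prime; since a monomial
of weight `≥ n a₂a₃` has its `a₂a₃`-th power in `I^(n a₂a₃)`, `\overline{I^n} = {ν ≥ N}` with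
`N = n a₂a₃`. For a monomial `b` with `N - a₂ ≤ ν(b) < N` the colon `(\overline{I^n} : b)` is
`{ν ≥ N - ν(b)} = {ν ≥ 1}`. Conversely, if `(\overline{I^n} : f)` is prime it contains
`x_{i_3}`, so some monomial of `f` has weight in `[N - a₂, N)`. The least degree of such a
monomial is `n + a₂ + ⌈a₃/a₂⌉ − 3`, attained by `x_{i_1}^{n-1} x_{i_2}^{a₂-1} x_{i_3}^{⌈a₃/a₂⌉-1}`.
-/

theorem mem_intClosure_of_pow_mem {R : Type*} [CommRing R] {I : Ideal R} {x : R} {k : ℕ}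
    (hk : 0 < k) (hx : x ^ k ∈ I ^ k) : x ∈ intClosure I := by
  refine Ideal.subset_span ⟨k, hk, fun i ↦ if i = k then -x ^ k else 0, fun i _ ↦ ?_, ?_⟩ <;>
    dsimp only
  · split_ifs with h
    · subst h
      exact neg_mem hx
    · exact zero_mem _
  · rw [Finset.sum_eq_single_of_mem k (Finset.mem_Icc.2 ⟨hk, le_rfl⟩)
      fun i _ hik ↦ by rw [if_neg hik, zero_mul]]
    simp

theorem Ideal.colon_mem_associatedPrimes {R : Type*} [CommRing R] {J : Ideal R} {f : R}
    (h : (J.colon (Ideal.span {f})).IsPrime) :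
    J.colon (Ideal.span {f}) ∈ associatedPrimes R (R ⧸ J) := by
  refine ⟨h, Ideal.Quotient.mk J f, ?_⟩
  have : (⊥ : Submodule R (R ⧸ J)).colon {Ideal.Quotient.mk J f} = J.colon (Ideal.span {f}) := by
    ext r
    rw [Submodule.mem_colon_singleton, Ideal.mem_colon_span_singleton, Submodule.mem_bot,
      Algebra.smul_def, Ideal.Quotient.algebraMap_eq, ← map_mul, Ideal.Quotient.eq_zero_iff_mem]
  rw [this, h.radical]

theorem vnumber_eq_of_isLeast {K σ : Type*} [Field K] {J : Ideal (MvPolynomial σ K)} {D : ℕ}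
    (h : IsLeast {d | ∃ f : MvPolynomial σ K, f.IsHomogeneous d ∧
      (J.colon (Ideal.span {f})).IsPrime} D) :
    vnumber J = D :=
  IsLeast.csInf_eq ⟨h.1.imp fun _ hf ↦ ⟨hf.1, Ideal.colon_mem_associatedPrimes hf.2⟩,
    fun _ ⟨f, hf, hP⟩ ↦ h.2 ⟨f, hf, (AssociatedPrimes.mem_iff.1 hP).isPrime⟩⟩

theorem le_mul_natCeil_div_lt {a b : ℕ} (hb : 0 < b) :
    a ≤ b * ⌈(a : ℚ) / b⌉₊ ∧ b * ⌈(a : ℚ) / b⌉₊ < a + b := by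
  have hb' : (0 : ℚ) < b := by exact_mod_cast hb
  have h1 : (a : ℚ) / b ≤ ⌈(a : ℚ) / b⌉₊ := Nat.le_ceil _
  have h2 : (⌈(a : ℚ) / b⌉₊ : ℚ) < a / b + 1 := Nat.ceil_lt_add_one (by positivity)
  rw [div_le_iff₀' hb'] at h1
  rw [div_add_one hb'.ne', lt_div_iff₀' hb'] at h2
  exact ⟨by exact_mod_cast h1, by exact_mod_cast h2⟩

theorem Finsupp.exists_ne_zero_of_weight_ne_zero {σ : Type*} {w : σ → ℕ} {d : σ →₀ ℕ}
    (hd : Finsupp.weight w d ≠ 0) : ∃ j, d j ≠ 0 ∧ w j ≠ 0 := by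
  contrapose! hd
  rw [Finsupp.weight_apply]
  exact Finset.sum_eq_zero fun j hj ↦ by simp [hd j (Finsupp.mem_support_iff.1 hj)]

namespace MvPowerSeries

theorem weightedOrder_pow {σ R : Type*} [Semiring R] [NoZeroDivisors R] [Nontrivial R]
    (w : σ → ℕ) (f : MvPowerSeries σ R) (k : ℕ) :
    (f ^ k).weightedOrder w = k • f.weightedOrder w := by
  induction k with
  | zero => simp
  | succ k ih => rw [pow_succ, weightedOrder_mul, ih, succ_nsmul]

end MvPowerSeries

namespace MvPolynomial

variable {σ R : Type*} [CommRing R] (w : σ → ℕ)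

def weightIdeal (t : ℕ) : Ideal (MvPolynomial σ R) where
  carrier := {f | (t : ℕ∞) ≤ (f : MvPowerSeries σ R).weightedOrder w}
  add_mem' hf hg := by
    rw [Set.mem_ofPred_eq, coe_add]
    exact (le_min hf hg).trans (MvPowerSeries.min_weightedOrder_le_add w)
  zero_mem' := by simp
  smul_mem' r f hf := by
    rw [smul_eq_mul, Set.mem_ofPred_eq, coe_mul]
    exact hf.trans (le_add_self.trans (MvPowerSeries.le_weightedOrder_mul w))

variable {w} {s t : ℕ} {f g : MvPolynomial σ R}

theorem mem_weightIdeal :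
    f ∈ weightIdeal w t ↔ (t : ℕ∞) ≤ (f : MvPowerSeries σ R).weightedOrder w :=
  Iff.rfl

theorem mem_weightIdeal_iff_forall_support :
    f ∈ weightIdeal w t ↔ ∀ d ∈ f.support, t ≤ Finsupp.weight w d := by
  refine ⟨fun hf d hd ↦ ?_, fun h ↦ MvPowerSeries.nat_le_weightedOrder w fun d hd ↦ ?_⟩
  · have := hf.trans (MvPowerSeries.weightedOrder_le w (by rwa [coeff_coe, ← mem_support_iff]))
    exact_mod_cast this
  · rw [coeff_coe, ← notMem_support_iff]
    exact fun hmem ↦ (h d hmem).not_gt hd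

theorem monomial_mem_weightIdeal {d : σ →₀ ℕ} (r : R) (h : t ≤ Finsupp.weight w d) :
    monomial d r ∈ weightIdeal w t := by
  classical
  rw [mem_weightIdeal_iff_forall_support]
  intro e he
  rwa [Finset.mem_singleton.1 (support_monomial_subset he)]

theorem mul_mem_weightIdeal (hf : f ∈ weightIdeal w s) (hg : g ∈ weightIdeal w t) :
    f * g ∈ weightIdeal w (s + t) := by
  rw [mem_weightIdeal, coe_mul, Nat.cast_add]
  exact (add_le_add hf hg).trans (MvPowerSeries.le_weightedOrder_mul w)

theorem weightIdeal_anti : Antitone (weightIdeal w : ℕ → Ideal (MvPolynomial σ R)) :=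
  fun _ _ hst _ hf ↦ mem_weightIdeal.2 ((Nat.cast_le.2 hst).trans hf)

theorem pow_mem_weightIdeal (hf : f ∈ weightIdeal w t) (k : ℕ) : f ^ k ∈ weightIdeal w (k * t) := by
  rw [mem_weightIdeal, coe_pow, Nat.cast_mul, ← nsmul_eq_mul]
  exact (nsmul_le_nsmul_right hf k).trans (MvPowerSeries.le_weightedOrder_pow w k)

theorem pow_le_weightIdeal {J : Ideal (MvPolynomial σ R)} (hJ : J ≤ weightIdeal w t) (m : ℕ) :
    J ^ m ≤ weightIdeal w (m * t) := by
  induction m with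
  | zero => exact fun f _ ↦ by simp [mem_weightIdeal]
  | succ m ih =>
    rw [pow_succ, Nat.succ_mul]
    exact Ideal.mul_le.2 fun f hf g hg ↦ mul_mem_weightIdeal (ih hf) (hJ hg)

theorem weightIdeal_eq_weightIdeal_one (hs : 1 ≤ s) (hw : ∀ j, w j ≠ 0 → s ≤ w j) :
    (weightIdeal w s : Ideal (MvPolynomial σ R)) = weightIdeal w 1 := by
  refine le_antisymm (weightIdeal_anti hs) fun f hf ↦ ?_
  rw [mem_weightIdeal_iff_forall_support] at hf ⊢
  intro d hd
  obtain ⟨j, hdj, hwj⟩ :=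
    Finsupp.exists_ne_zero_of_weight_ne_zero (Nat.one_le_iff_ne_zero.1 (hf d hd))
  rw [← Finsupp.weight_sub_single_add hdj]
  exact (hw j hwj).trans le_add_self

theorem exists_mem_support_weight_lt_of_isPrime_colon {j : σ} (hj : 0 < w j)
    (hP : ((weightIdeal w t : Ideal (MvPolynomial σ R)).colon (Ideal.span {f})).IsPrime) :
    ∃ e ∈ f.support, Finsupp.weight w e < t ∧ t ≤ Finsupp.weight w e + w j := by
  have hf : f ∉ weightIdeal w t := fun hf ↦
    hP.ne_top ((Ideal.eq_top_iff_one _).2 (Ideal.mem_colon_span_singleton.2 (by rwa [one_mul])))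
  have hXj : X j ∈ (weightIdeal w t : Ideal (MvPolynomial σ R)).colon (Ideal.span {f}) := by
    refine hP.mem_of_pow_mem t (Ideal.mem_colon_span_singleton.2 (Ideal.mul_mem_right _ _ ?_))
    rw [X_pow_eq_monomial]
    exact monomial_mem_weightIdeal _ (by rw [Finsupp.weight_single, smul_eq_mul]; nlinarith)
  obtain ⟨e, he, hlt⟩ : ∃ e ∈ f.support, Finsupp.weight w e < t := by
    simpa [mem_weightIdeal_iff_forall_support] using hf
  refine ⟨e, he, hlt, ?_⟩
  have := mem_weightIdeal_iff_forall_support.1 (Ideal.mem_colon_span_singleton.1 hXj)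
    (Finsupp.single j 1 + e) (by rwa [mem_support_iff, coeff_X_mul, ← mem_support_iff])
  rwa [map_add, Finsupp.weight_single, one_smul, add_comm] at this

section IsDomain

variable [IsDomain R]

theorem isPrime_weightIdeal_one : (weightIdeal w 1 : Ideal (MvPolynomial σ R)).IsPrime := by
  refine Ideal.isPrime_iff.2 ⟨fun h ↦ ?_, fun {f g} hfg ↦ ?_⟩
  · simpa [mem_weightIdeal] using (Ideal.eq_top_iff_one _).1 h
  · simp only [mem_weightIdeal, Nat.cast_one, Order.one_le_iff_ne_zero, coe_mul,
      MvPowerSeries.weightedOrder_mul] at hfg ⊢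
    contrapose! hfg
    rw [hfg.1, hfg.2, add_zero]

theorem intClosure_le_weightIdeal {J : Ideal (MvPolynomial σ R)} (hJ : J ≤ weightIdeal w t) :
    intClosure J ≤ weightIdeal w t := by
  rw [intClosure, Ideal.span_le]
  rintro x ⟨k, hk, c, hc, hx⟩
  by_contra hxt
  replace hxt : (x : MvPowerSeries σ R).weightedOrder w < t := not_le.1 hxt
  obtain ⟨m, hm⟩ : ∃ m : ℕ, (x : MvPowerSeries σ R).weightedOrder w = m :=
    (ENat.ne_top_iff_exists.1 hxt.ne_top).imp fun _ h ↦ h.symm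
  have hmt : m < t := by rwa [hm, Nat.cast_lt] at hxt
  -- every other term of the integral equation has weight above `ν(x ^ k) = k m`
  have hsum : ∑ i ∈ Finset.Icc 1 k, c i * x ^ (k - i) ∈ weightIdeal w (k * m + 1) := by
    refine Submodule.sum_mem _ fun i hi ↦ weightIdeal_anti ?_ (mul_mem_weightIdeal
      (pow_le_weightIdeal hJ i (hc i hi)) (pow_mem_weightIdeal (le_of_eq hm.symm) (k - i)))
    obtain ⟨hi1, hik⟩ := Finset.mem_Icc.1 hi
    have : i * (m + 1) ≤ i * t := Nat.mul_le_mul_left i hmt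
    have : (k - i) * m + i * m = k * m := by rw [← add_mul, Nat.sub_add_cancel hik]
    nlinarith
  have hxk : x ^ k ∈ weightIdeal w (k * m + 1) := eq_neg_of_add_eq_zero_left hx ▸ neg_mem hsum
  rw [mem_weightIdeal, coe_pow, MvPowerSeries.weightedOrder_pow, hm, nsmul_eq_mul] at hxk
  norm_cast at hxk
  omega

theorem colon_weightIdeal_monomial (d : σ →₀ ℕ) :
    (weightIdeal w t : Ideal (MvPolynomial σ R)).colon (Ideal.span {monomial d (1 : R)}) =
      weightIdeal w (t - Finsupp.weight w d) := by
  ext f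
  rw [Ideal.mem_colon_span_singleton, mem_weightIdeal, mem_weightIdeal, coe_mul,
    MvPowerSeries.weightedOrder_mul, coe_monomial,
    MvPowerSeries.weightedOrder_monomial_of_ne_zero w one_ne_zero, ENat.natCast_sub,
    tsub_le_iff_right]

theorem isPrime_colon_weightIdeal_monomial {d : σ →₀ ℕ} (hlt : Finsupp.weight w d < t)
    (hw : ∀ j, w j ≠ 0 → t ≤ Finsupp.weight w d + w j) :
    ((weightIdeal w t : Ideal (MvPolynomial σ R)).colon
      (Ideal.span {monomial d (1 : R)})).IsPrime := by
  rw [colon_weightIdeal_monomial, weightIdeal_eq_weightIdeal_one (by omega)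
    fun j hj ↦ by have := hw j hj; omega]
  exact isPrime_weightIdeal_one

end IsDomain

end MvPolynomial

section ThreeVariables

open Finsupp in
theorem single_add_single_add_single_le {σ : Type*} {i1 i2 i3 : σ} (h12 : i1 ≠ i2)
    (h13 : i1 ≠ i3) (h23 : i2 ≠ i3) {e : σ →₀ ℕ} {x y z : ℕ} (hx : x ≤ e i1) (hy : y ≤ e i2)
    (hz : z ≤ e i3) : single i1 x + single i2 y + single i3 z ≤ e := by
  classical
  intro j
  simp only [Finsupp.coe_add, Pi.add_apply, Finsupp.single_apply]
  split_ifs <;> subst_vars <;> simp_all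

theorem add_add_le_degree {σ : Type*} {i1 i2 i3 : σ} (h12 : i1 ≠ i2) (h13 : i1 ≠ i3)
    (h23 : i2 ≠ i3) (e : σ →₀ ℕ) : e i1 + e i2 + e i3 ≤ e.degree := by
  simpa using Finsupp.degree_mono (single_add_single_add_single_le h12 h13 h23 le_rfl le_rfl le_rfl)

variable {σ R : Type*} [CommRing R] {i1 i2 i3 : σ} {a2 a3 : ℕ}

theorem monomial_mem_span_pow (h12 : i1 ≠ i2) (h13 : i1 ≠ i3) (h23 : i2 ≠ i3) (d : σ →₀ ℕ) :
    monomial d (1 : R) ∈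
      Ideal.span {(X i1 : MvPolynomial σ R), X i2 ^ a2, X i3 ^ a3} ^
        (d i1 + d i2 / a2 + d i3 / a3) := by
  set v := Finsupp.single i1 (d i1) + Finsupp.single i2 (a2 * (d i2 / a2)) +
    Finsupp.single i3 (a3 * (d i3 / a3))
  have hv : v ≤ d := single_add_single_add_single_le h12 h13 h23 le_rfl (Nat.mul_div_le _ _)
    (Nat.mul_div_le _ _)
  have hd : monomial d (1 : R) = monomial (d - v) 1 *
      (X i1 ^ d i1 * (X i2 ^ a2) ^ (d i2 / a2) * (X i3 ^ a3) ^ (d i3 / a3)) := by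
    rw [← pow_mul, ← pow_mul, X_pow_eq_monomial, X_pow_eq_monomial, X_pow_eq_monomial,
      monomial_mul, monomial_mul, monomial_mul, mul_one, mul_one, mul_one, tsub_add_cancel_of_le hv]
  rw [hd, pow_add, pow_add]
  refine Ideal.mul_mem_left _ _ (Ideal.mul_mem_mul (Ideal.mul_mem_mul ?_ ?_) ?_) <;>
    exact Ideal.pow_mem_pow (Ideal.subset_span (by simp)) _

variable [DecidableEq σ]

variable (i1 i2 i3 a2 a3) in
def tripleWeight : σ → ℕ := Pi.single i1 (a2 * a3) + Pi.single i2 a3 + Pi.single i3 a2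

theorem weight_tripleWeight (d : σ →₀ ℕ) :
    Finsupp.weight (tripleWeight i1 i2 i3 a2 a3) d = a2 * a3 * d i1 + a3 * d i2 + a2 * d i3 := by
  have (v : σ → ℕ) : (d.sum fun i c ↦ c • v i) = Finsupp.weight v d := rfl
  simp only [tripleWeight, Finsupp.weight_apply, Pi.add_apply, smul_add]
  rw [Finsupp.sum_add, Finsupp.sum_add, this, this, this, Finsupp.weight_single_index,
    Finsupp.weight_single_index, Finsupp.weight_single_index, smul_eq_mul, smul_eq_mul, smul_eq_mul]
  ring

theorem tripleWeight_apply_right (h13 : i1 ≠ i3) (h23 : i2 ≠ i3) :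
    tripleWeight i1 i2 i3 a2 a3 i3 = a2 := by
  simp [tripleWeight, h13.symm, h23.symm]

theorem le_tripleWeight (ha3 : 1 ≤ a3) (h23 : a2 ≤ a3) {j : σ}
    (hj : tripleWeight i1 i2 i3 a2 a3 j ≠ 0) :
    a2 ≤ tripleWeight i1 i2 i3 a2 a3 j := by
  simp only [tripleWeight, Pi.add_apply, Pi.single_apply] at hj ⊢
  split_ifs at hj ⊢ <;> simp_all <;> nlinarith

theorem span_le_weightIdeal_tripleWeight (h12 : i1 ≠ i2) (h13 : i1 ≠ i3) (h23 : i2 ≠ i3) :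
    Ideal.span {(X i1 : MvPolynomial σ R), X i2 ^ a2, X i3 ^ a3} ≤
      weightIdeal (tripleWeight i1 i2 i3 a2 a3) (a2 * a3) := by
  simp only [Ideal.span_le, Set.insert_subset_iff, Set.singleton_subset_iff, SetLike.mem_coe]
  rw [← pow_one (X i1)]
  refine ⟨?_, ?_, ?_⟩ <;> rw [X_pow_eq_monomial] <;>
    refine monomial_mem_weightIdeal _ (le_of_eq ?_) <;>
    simp [weight_tripleWeight, h12, h13, h23, h12.symm, h13.symm, h23.symm, mul_comm]

theorem monomial_mem_intClosure_span_pow (h12 : i1 ≠ i2) (h13 : i1 ≠ i3) (h23 : i2 ≠ i3)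
    (ha2 : 1 ≤ a2) (ha3 : 1 ≤ a3) {n : ℕ} {d : σ →₀ ℕ}
    (hd : n * (a2 * a3) ≤ Finsupp.weight (tripleWeight i1 i2 i3 a2 a3) d) :
    monomial d (1 : R) ∈ intClosure (Ideal.span {X i1, X i2 ^ a2, X i3 ^ a3} ^ n) := by
  refine mem_intClosure_of_pow_mem (k := a2 * a3) (by positivity) ?_
  rw [monomial_pow, one_pow, ← pow_mul]
  refine Ideal.pow_le_pow_right ?_ (monomial_mem_span_pow h12 h13 h23 _)
  have h2 : a2 * a3 * d i2 / a2 = a3 * d i2 := by rw [mul_assoc, Nat.mul_div_cancel_left _ ha2]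
  have h3 : a2 * a3 * d i3 / a3 = a2 * d i3 := by
    rw [mul_comm a2, mul_assoc, Nat.mul_div_cancel_left _ ha3]
  simpa only [Finsupp.smul_apply, smul_eq_mul, h2, h3, ← weight_tripleWeight] using hd

theorem intClosure_span_pow_eq_weightIdeal [IsDomain R] (h12 : i1 ≠ i2) (h13 : i1 ≠ i3)
    (h23 : i2 ≠ i3) (ha2 : 1 ≤ a2) (ha3 : 1 ≤ a3) (n : ℕ) :
    intClosure (Ideal.span {(X i1 : MvPolynomial σ R), X i2 ^ a2, X i3 ^ a3} ^ n) =
      weightIdeal (tripleWeight i1 i2 i3 a2 a3) (n * (a2 * a3)) := by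
  refine le_antisymm (intClosure_le_weightIdeal
    (pow_le_weightIdeal (span_le_weightIdeal_tripleWeight h12 h13 h23) n)) fun f hf ↦ ?_
  rw [← support_sum_monomial_coeff f]
  refine Submodule.sum_mem _ fun d hd ↦ ?_
  rw [← mul_one (coeff d f), ← C_mul_monomial]
  exact Ideal.mul_mem_left _ _ (monomial_mem_intClosure_span_pow h12 h13 h23 ha2 ha3
    (mem_weightIdeal_iff_forall_support.1 hf d hd))

end ThreeVariables

theorem add_add_sub_three_le_of_weight_bounds {n a2 a3 c e1 e2 e3 : ℕ} (h23 : a2 ≤ a3)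
    (hc : a2 * c < a3 + a2)
    (hlo : n * (a2 * a3) ≤ a2 * a3 * e1 + a3 * e2 + a2 * e3 + a2)
    (hhi : a2 * a3 * e1 + a3 * e2 + a2 * e3 < n * (a2 * a3)) :
    n + a2 + c - 3 ≤ e1 + e2 + e3 := by
  obtain ⟨m, rfl⟩ : ∃ m, n = e1 + m + 1 := by
    refine Nat.exists_eq_add_of_lt (lt_of_not_ge fun h ↦ hhi.not_ge ?_)
    nlinarith [Nat.mul_le_mul_left (a2 * a3) h]
  obtain ⟨s, hs⟩ : ∃ s, (m + 1) * a2 = e2 + s + 1 := by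
    refine Nat.exists_eq_add_of_lt (lt_of_not_ge fun h ↦ hhi.not_ge ?_)
    nlinarith [Nat.mul_le_mul_left a3 h]
  have he3 : c + s ≤ e3 + 1 := by
    have : a2 * (c + s) < a2 * (e3 + 2) := by nlinarith [Nat.mul_le_mul_right s h23]
    have := Nat.lt_of_mul_lt_mul_left this
    omega
  have : m + a2 ≤ (m + 1) * a2 := by nlinarith
  omega

theorem vnumber_weightIdeal_tripleWeight {K σ : Type*} [Field K] [DecidableEq σ] {i1 i2 i3 : σ}
    (h12 : i1 ≠ i2) (h13 : i1 ≠ i3) (h23 : i2 ≠ i3) {n a2 a3 c : ℕ} (hn : 1 ≤ n) (ha2 : 1 ≤ a2)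
    (h23' : a2 ≤ a3) (hc1 : a3 ≤ a2 * c) (hc2 : a2 * c < a3 + a2) :
    vnumber (weightIdeal (R := K) (tripleWeight i1 i2 i3 a2 a3) (n * (a2 * a3))) =
      n + a2 + c - 3 := by
  refine vnumber_eq_of_isLeast ⟨?_, ?_⟩
  · obtain ⟨n', rfl⟩ := Nat.exists_eq_add_of_le' hn
    obtain ⟨a2', rfl⟩ := Nat.exists_eq_add_of_le' ha2
    obtain ⟨c', rfl⟩ := Nat.exists_eq_add_of_le' (show 1 ≤ c by nlinarith)
    set b := Finsupp.single i1 n' + Finsupp.single i2 a2' + Finsupp.single i3 c'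
    have hb : Finsupp.weight (tripleWeight i1 i2 i3 (a2' + 1) a3) b =
        (a2' + 1) * a3 * n' + a3 * a2' + (a2' + 1) * c' := by
      simp [b, weight_tripleWeight, h12, h13, h23, h12.symm, h13.symm, h23.symm]
    refine ⟨monomial b 1, isHomogeneous_monomial _ ?_, isPrime_colon_weightIdeal_monomial ?_ ?_⟩
    · simp only [b, map_add, Finsupp.degree_single]
      omega
    · rw [hb]
      nlinarith
    · intro j hj
      have := le_tripleWeight (by omega) h23' hj
      rw [hb]
      nlinarith
  · rintro d ⟨f, hf, hP⟩
    obtain ⟨e, he, hlt, hle⟩ := exists_mem_support_weight_lt_of_isPrime_colon (j := i3)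
      (by rw [tripleWeight_apply_right h13 h23]; omega) hP
    rw [weight_tripleWeight] at hlt hle
    rw [tripleWeight_apply_right h13 h23] at hle
    calc n + a2 + c - 3 ≤ e i1 + e i2 + e i3 :=
          add_add_sub_three_le_of_weight_bounds h23' hc2 hle hlt
      _ ≤ e.degree := add_add_le_degree h12 h13 h23 e
      _ = d := by rw [Finsupp.degree_eq_weight_one]; exact hf (mem_support_iff.1 he)

/-- For `I = ⟨x_{i_1}, x_{i_2}^{a_2}, x_{i_3}^{a_3}⟩` with `1 ≤ a_2 ≤ a_3`:
`v(closure(I^n)) = n + a_2 + ⌈a_3/a_2⌉ − 3` for all `n ≥ 1`. -/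
theorem vnumber_intClosure_pow_three_gen_a1_one
    {K : Type*} [Field K] {σ : Type*} (i1 i2 i3 : σ)
    (h12 : i1 ≠ i2) (h13 : i1 ≠ i3) (h23 : i2 ≠ i3)
    (a2 a3 : ℕ) (ha2 : 1 ≤ a2) (h23' : a2 ≤ a3)
    (I : Ideal (MvPolynomial σ K))
    (hI : I = Ideal.span {(X i1 : MvPolynomial σ K), (X i2) ^ a2, (X i3) ^ a3})
    (n : ℕ) (hn : 1 ≤ n) :
    (vnumber (intClosure (I ^ n)) : ℤ) = (n : ℤ) + a2 + ⌈(a3 : ℚ) / (a2 : ℚ)⌉ - 3 := by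
  classical
  obtain ⟨hc1, hc2⟩ := le_mul_natCeil_div_lt (a := a3) ha2
  rw [hI, intClosure_span_pow_eq_weightIdeal h12 h13 h23 ha2 (ha2.trans h23'),
    vnumber_weightIdeal_tripleWeight h12 h13 h23 hn ha2 h23' hc1 hc2,
    ← Int.natCast_ceil_eq_ceil (by positivity), Nat.cast_sub (by nlinarith)]
  push_cast
  ring
end

section
/- Let I = ⟨u_1, u_2⟩ be a height-two complete intersection monomial ideal in S with u_1 = (x_{i_1}···x_{i_q})^α and u_2 = x_{j_1}^{β_1}···x_{j_l}^{β_l}, where 1 ≤ α ≤ β_1 ≤ ... ≤ β_l and q ≤ l, and {x_{i_p}} disjoint from {x_{j_t}}. Then for all n ≥ 1 and every associated prime P of \overline{I^n}, v(\overline{I^n}) = v_P(\overline{I^n}) = n·qα + ∑_{j=1}^l ⌈β_j/α⌉ − 2. -/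
/-!
For a pair `(p, t)` let `ν_{pt}` be the monomial valuation giving `x_p` weight `β_t`, `y_t` weight
`α` and all other variables weight `0`. Integral closure does not lower a valuation, so
`intClosure (I ^ n)` lies in the monomial ideal `J = ⋂ J_{pt}`, `J_{pt} = {ν_{pt} ≥ nαβ_t}`;
conversely every monomial `m ∈ J` has `m ^ α ∈ I ^ (nα)`, so the two ideals agree.

A prime `Q = √(J : f)` contains some `(J_{pt} : f)` with `f ∉ J_{pt}`. It then contains powers of
`x_p` and `y_t`, and since `ν_{pt} (g f) = ν_{pt} g + ν_{pt} f < nαβ_t` when `ν_{pt} g = 0`, it is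
contained in `{ν_{pt} > 0} = ⟨x_p, y_t⟩`. A term of `f` that lies outside `J_{pt}` but enters `J`
after multiplication by `x_p` and by `y_t` has degree at least `nqα + ∑ ⌈β_t/α⌉ - 2`, and the
monomial `(x_1 ⋯ x_q)^{nα} ∏ y_t^{⌈β_t/α⌉} / (x_p y_t)` has this degree and colon ideal
`⟨x_p, y_t⟩`.
-/

open MvPolynomial Ideal

/-- The local v-number of `J` at a prime `P`. -/
noncomputable def vnumberAt {K : Type*} [Field K] {σ : Type*}
    (J P : Ideal (MvPolynomial σ K)) : ℕ :=
  sInf {d : ℕ | ∃ f : MvPolynomial σ K, f.IsHomogeneous d ∧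
    Submodule.colon J (Ideal.span {f}) = P}

lemma ceilDiv_add_le {a b c s : ℕ} (ha : 0 < a) (hab : a ≤ b) (hs : 0 < s)
    (h : s * b ≤ c * a) : b ⌈/⌉ a + (s - 1) ≤ c := by
  obtain ⟨s, rfl⟩ := Nat.exists_eq_add_of_lt hs
  simp only [zero_add, Nat.add_sub_cancel]
  have hsa : s * a ≤ s * b := Nat.mul_le_mul_left s hab
  have hsc : s ≤ c := by
    by_contra! hcs
    nlinarith
  obtain ⟨c, rfl⟩ := Nat.exists_eq_add_of_le hsc
  rw [add_comm s c, add_le_add_iff_right, ceilDiv_le_iff_le_mul ha]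
  nlinarith

lemma pos_ceilDiv {a b : ℕ} (ha : 0 < a) (hb : 0 < b) : 0 < b ⌈/⌉ a :=
  Nat.pos_of_mul_pos_left (hb.trans_le (le_smul_ceilDiv ha))

lemma mul_ceilDiv_sub_one_lt {a b : ℕ} (ha : 0 < a) (hb : 0 < b) : a * (b ⌈/⌉ a - 1) < b := by
  have := pos_ceilDiv ha hb
  by_contra! h
  have := (ceilDiv_le_iff_le_mul ha).2 h
  omega

lemma intCast_ceilDiv_eq_ceil {a b : ℕ} (ha : 0 < a) (hb : 0 < b) :
    ((b ⌈/⌉ a : ℕ) : ℤ) = ⌈(b : ℚ) / a⌉ := by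
  have hle : b ≤ a * (b ⌈/⌉ a) := le_smul_ceilDiv ha
  have hlt := mul_ceilDiv_sub_one_lt ha hb
  have haQ : (0 : ℚ) < a := by exact_mod_cast ha
  symm
  rw [Int.ceil_eq_iff, Int.cast_natCast, lt_div_iff₀ haQ, div_le_iff₀ haQ]
  constructor
  · have : ((b ⌈/⌉ a - 1 : ℕ) : ℚ) * a < b := by exact_mod_cast (mul_comm a _ ▸ hlt)
    rwa [Nat.cast_sub (pos_ceilDiv ha hb), Nat.cast_one] at this
  · exact_mod_cast (mul_comm a _ ▸ hle)

section IndicatorSums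

variable {ι : Type*} [Fintype ι] [DecidableEq ι]

lemma sum_add_ite_eq_add_one (f : ι → ℕ) (i₀ : ι) :
    ∑ i, (f i + if i = i₀ then 1 else 0) = ∑ i, f i + 1 := by
  simp [Finset.sum_add_distrib]

lemma sum_tsub_ite_add_one {f : ι → ℕ} {i₀ : ι} (h : 0 < f i₀) :
    ∑ i, (f i - if i = i₀ then 1 else 0) + 1 = ∑ i, f i := by
  rw [← sum_add_ite_eq_add_one _ i₀]
  refine Finset.sum_congr rfl fun i _ => ?_
  split_ifs with hi
  · subst hi
    omega
  · rfl

end IndicatorSums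

/-- The counting behind the lower bound on the v-number: `a` and `b` are the exponents of the
`x_p` and the `y_t` in a monomial that violates the inequality for `(p₀, t₀)` but satisfies all
of them after multiplication by `x_{p₀}` (which gives `ha`) and by `y_{t₀}` (which gives `hb`). -/
lemma add_sum_ceilDiv_le {q l n α : ℕ} (hql : q ≤ l) (hα : 0 < α) {β : Fin l → ℕ}
    (hαβ : ∀ t, α ≤ β t) {a : Fin q → ℕ} {b : Fin l → ℕ} {p₀ : Fin q} {t₀ : Fin l}
    (hlt : a p₀ * β t₀ + b t₀ * α < n * (α * β t₀))
    (ha : ∀ p ≠ p₀, n * (α * β t₀) ≤ a p * β t₀ + b t₀ * α)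
    (hb : ∀ t, n * (α * β t) ≤ a p₀ * β t + (b t + if t = t₀ then 1 else 0) * α) :
    n * q * α + ∑ t, β t ⌈/⌉ α ≤ ∑ p, a p + ∑ t, b t + 2 := by
  have hs : a p₀ < n * α := by
    refine Nat.lt_of_mul_lt_mul_right (a := β t₀) ?_
    rw [mul_assoc]
    omega
  have hsum_a : q * (a p₀ + 1) ≤ ∑ p, a p + 1 := by
    have key (p : Fin q) : a p₀ + 1 ≤ a p + if p = p₀ then 1 else 0 := by
      split_ifs with hp
      · rw [hp]
      · have : a p₀ * β t₀ < a p * β t₀ := by linarith [ha p hp]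
        have := Nat.lt_of_mul_lt_mul_right this
        omega
    simpa [sum_add_ite_eq_add_one] using Finset.sum_le_sum fun p (_ : p ∈ Finset.univ) => key p
  have hsum_b : ∑ t, β t ⌈/⌉ α + l * (n * α - a p₀ - 1) ≤ ∑ t, b t + 1 := by
    have key (t : Fin l) : β t ⌈/⌉ α + (n * α - a p₀ - 1) ≤ b t + if t = t₀ then 1 else 0 := by
      refine ceilDiv_add_le hα (hαβ t) (by omega) ?_
      rw [Nat.sub_mul, tsub_le_iff_right, mul_assoc]
      linarith [hb t]
    simpa [sum_add_ite_eq_add_one, Finset.sum_add_distrib] using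
      Finset.sum_le_sum fun t (_ : t ∈ Finset.univ) => key t
  have hql' : q * (n * α - a p₀ - 1) ≤ l * (n * α - a p₀ - 1) := Nat.mul_le_mul_right _ hql
  have hsplit : n * q * α = q * (a p₀ + 1) + q * (n * α - a p₀ - 1) := by
    rw [← Nat.mul_add, show a p₀ + 1 + (n * α - a p₀ - 1) = n * α by omega]
    ring
  omega

namespace Finsupp

variable {σ ι : Type*} [Fintype ι] {z : ι → σ}

lemma sum_single_apply_self (hz : z.Injective) (c : ι → ℕ) (i : ι) :
    (∑ j, single (z j) (c j)) (z i) = c i := by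
  classical
  simp [finsetSum_apply, single_apply, hz.eq_iff]

lemma sum_single_apply_of_forall_ne (c : ι → ℕ) {s : σ} (hs : ∀ j, z j ≠ s) :
    (∑ j, single (z j) (c j)) s = 0 := by
  simp [finsetSum_apply, hs]

lemma sum_apply_add_sum_apply_le_degree {κ : Type*} [Fintype κ] {x : ι → σ} {y : κ → σ}
    (h : (Sum.elim x y).Injective) (e : σ →₀ ℕ) :
    ∑ i, e (x i) + ∑ j, e (y j) ≤ e.degree := by
  simpa [degree_eq_sum, Fintype.sum_sum_type] using
    degree_comapDomain_le_of_canonicallyOrderedAdd (x := e) h.injOn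

end Finsupp

lemma Ideal.IsPrime.exists_le_of_iInf_le {R ι : Type*} [CommRing R] [Fintype ι]
    {f : ι → Ideal R} {P : Ideal R} (hP : P.IsPrime) (h : ⨅ i, f i ≤ P) : ∃ i, f i ≤ P := by
  obtain ⟨i, -, hi⟩ := (hP.inf_le' (s := (Finset.univ : Finset ι))).1
    (by rwa [Finset.inf_univ_eq_iInf])
  exact ⟨i, hi⟩

lemma Ideal.exists_eq_radical_colon_of_mem_associatedPrimes {R : Type*} [CommRing R]
    {J P : Ideal R} (h : P ∈ associatedPrimes R (R ⧸ J)) :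
    ∃ f : R, P = (J.colon {f}).radical := by
  obtain ⟨-, z, hz⟩ := h
  obtain ⟨f, rfl⟩ := Ideal.Quotient.mk_surjective z
  refine ⟨f, hz.trans (congrArg Ideal.radical ?_)⟩
  ext r
  rw [Submodule.mem_colon_singleton, Submodule.mem_colon_singleton, Submodule.mem_bot,
    smul_eq_mul, Algebra.smul_def, Ideal.Quotient.algebraMap_eq, ← map_mul,
    Ideal.Quotient.eq_zero_iff_mem]

lemma mem_intClosure_of_pow_mem_pow {R : Type*} [CommRing R] {A : Ideal R} {r : R} {k : ℕ}
    (hk : 0 < k) (h : r ^ k ∈ A ^ k) : r ∈ intClosure A := by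
  refine Ideal.subset_span ⟨k, hk, fun i => if i = k then -r ^ k else 0, fun i _ => ?_, ?_⟩
  · dsimp only
    split_ifs with hi
    · exact neg_mem (hi ▸ h)
    · exact zero_mem _
  · simp [Finset.sum_ite_eq', Nat.one_le_of_lt hk]

namespace AddValuation

variable {R : Type*} [CommRing R] (v : AddValuation R ℕ∞)

def geIdeal (c : ℕ) : Ideal R where
  carrier := {r | (c : ℕ∞) ≤ v r}
  add_mem' ha hb := v.map_le_add ha hb
  zero_mem' := by simp
  smul_mem' r s hs := by
    simp only [Set.mem_ofPred_eq, smul_eq_mul, v.map_mul] at hs ⊢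
    exact le_add_left hs

variable {v}

@[simp]
lemma mem_geIdeal {c : ℕ} {r : R} : r ∈ v.geIdeal c ↔ (c : ℕ∞) ≤ v r := Iff.rfl

lemma pow_le_geIdeal {A : Ideal R} {c : ℕ} (hA : A ≤ v.geIdeal c) (i : ℕ) :
    A ^ i ≤ v.geIdeal (i * c) := by
  induction i with
  | zero => intro r _; simp
  | succ i ih =>
    rw [pow_succ, Ideal.mul_le]
    intro r hr s hs
    simp only [mem_geIdeal, v.map_mul, Nat.cast_mul, Nat.cast_add, add_mul, one_mul]
      at ih hA hr hs ⊢
    exact add_le_add (ih hr) (hA hs)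

instance isPrime_geIdeal_one : (v.geIdeal 1).IsPrime where
  ne_top' h := by simpa using (Ideal.eq_top_iff_one _).1 h
  mem_or_mem' {r s} h := by
    simp only [mem_geIdeal, Nat.cast_one, Order.one_le_iff_ne_zero, v.map_mul] at h ⊢
    by_contra! hrs
    exact h (by simp [hrs.1, hrs.2])

lemma colon_le_geIdeal_one {c : ℕ} {f : R} (hf : f ∉ v.geIdeal c) :
    (v.geIdeal c).colon {f} ≤ v.geIdeal 1 := by
  intro g hg
  simp only [Submodule.mem_colon_singleton, smul_eq_mul, mem_geIdeal, v.map_mul] at hg hf ⊢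
  by_contra! hg0
  rw [Order.lt_one_iff.1 hg0, zero_add] at hg
  exact hf hg

/-- If `v r < c`, then in an equation `r ^ k + ∑ a_i r ^ (k - i) = 0` with `v a_i ≥ i c` every
term of the sum has valuation `> k • v r = v (r ^ k)`. -/
lemma intClosure_le_geIdeal {A : Ideal R} {c : ℕ} (hA : A ≤ v.geIdeal c) :
    intClosure A ≤ v.geIdeal c := by
  refine Ideal.span_le.2 ?_
  rintro r ⟨k, hk, a, ha, heq⟩
  by_contra hr
  rw [SetLike.mem_coe, mem_geIdeal, not_le] at hr
  obtain ⟨m, hm⟩ : ∃ m : ℕ, v r = m :=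
    ⟨(v r).toNat, (ENat.natCast_toNat (hr.trans_le le_top).ne).symm⟩
  have hmc : m < c := by simpa [hm] using hr
  have hterm : ∀ i ∈ Finset.Icc 1 k, ((k * m + 1 : ℕ) : ℕ∞) ≤ v (a i * r ^ (k - i)) := by
    intro i hi
    obtain ⟨hi1, hik⟩ := Finset.mem_Icc.1 hi
    have hai : ((i * c : ℕ) : ℕ∞) ≤ v (a i) := pow_le_geIdeal hA i (ha i hi)
    rw [v.map_mul, v.map_pow, hm]
    calc ((k * m + 1 : ℕ) : ℕ∞) ≤ ((i * c + (k - i) * m : ℕ) : ℕ∞) := by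
          obtain ⟨j, rfl⟩ := Nat.exists_eq_add_of_le hik
          rw [Nat.add_sub_cancel_left]
          exact_mod_cast (show (i + j) * m + 1 ≤ i * c + j * m by
            nlinarith [Nat.mul_le_mul_left i hmc])
      _ ≤ v (a i) + (k - i) • (m : ℕ∞) := by
          push_cast
          exact add_le_add (by exact_mod_cast hai) le_rfl
  have hsum := v.map_le_sum hterm
  rw [← neg_eq_of_add_eq_zero_right heq, v.map_neg, v.map_pow, hm, nsmul_eq_mul, ← Nat.cast_mul,
    Nat.cast_le] at hsum
  omega

end AddValuation

namespace MvPolynomial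

variable {R : Type*} [CommRing R] {σ : Type*}

lemma mem_of_forall_monomial_mem {I : Ideal (MvPolynomial σ R)} {f : MvPolynomial σ R}
    (h : ∀ e ∈ f.support, monomial e (1 : R) ∈ I) : f ∈ I := by
  rw [f.as_sum]
  refine Ideal.sum_mem _ fun e he => ?_
  simpa [C_mul_monomial] using I.mul_mem_left (C (f.coeff e)) (h e he)

variable [IsDomain R]

open Finsupp (weight)

noncomputable def weightedOrd (w : σ → ℕ) : AddValuation (MvPolynomial σ R) ℕ∞ :=
  AddValuation.of (fun f => (f : MvPowerSeries σ R).weightedOrder w) (by simp) (by simp)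
    (fun f g => by simpa using MvPowerSeries.min_weightedOrder_le_add w)
    (fun f g => by simpa using MvPowerSeries.weightedOrder_mul w (f : MvPowerSeries σ R) g)

lemma le_weightedOrd_iff {w : σ → ℕ} {f : MvPolynomial σ R} {c : ℕ} :
    (c : ℕ∞) ≤ weightedOrd w f ↔ ∀ e ∈ f.support, c ≤ weight w e := by
  simp only [weightedOrd, AddValuation.of_apply]
  constructor
  · intro h e he
    have := h.trans (MvPowerSeries.weightedOrder_le w (f := (f : MvPowerSeries σ R))
      (by rwa [coeff_coe, ← mem_support_iff]))
    exact_mod_cast this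
  · refine fun h => MvPowerSeries.nat_le_weightedOrder w fun e he => ?_
    rw [coeff_coe, ← notMem_support_iff]
    exact fun hmem => (h e hmem).not_gt he

lemma weightedOrd_monomial (w : σ → ℕ) (e : σ →₀ ℕ) {a : R} (ha : a ≠ 0) :
    weightedOrd w (monomial e a) = weight w e := by
  simp [weightedOrd, MvPowerSeries.weightedOrder_monomial_of_ne_zero w ha]

lemma geIdeal_one_weightedOrd (w : σ → ℕ) :
    (weightedOrd (R := R) w).geIdeal 1 = Ideal.span (X '' {s | w s ≠ 0}) := by
  ext f
  rw [AddValuation.mem_geIdeal, le_weightedOrd_iff, mem_ideal_span_X_image]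
  refine forall₂_congr fun e _ => ?_
  simp only [Finsupp.weight_apply, Finsupp.sum, smul_eq_mul, Nat.one_le_iff_ne_zero, ne_eq,
    Finset.sum_eq_zero_iff, Finsupp.mem_support_iff, mul_eq_zero, not_forall, not_or,
    Set.mem_ofPred_eq]
  constructor <;> rintro ⟨i, h⟩ <;> exact ⟨i, by tauto⟩

end MvPolynomial

section VNumber

variable {K : Type*} [Field K] {σ : Type*} {J P : Ideal (MvPolynomial σ K)}
  {f : MvPolynomial σ K} {D : ℕ}

lemma vnumber_eq_of_forall_le (hf : f.IsHomogeneous D)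
    (hass : J.colon {f} ∈ associatedPrimes _ (MvPolynomial σ K ⧸ J))
    (hmin : ∀ (g : MvPolynomial σ K) d, g.IsHomogeneous d → (J.colon {g}).IsPrime → D ≤ d) :
    vnumber J = D := by
  refine IsLeast.csInf_eq ⟨⟨f, hf, by rwa [Ideal.colon_span]⟩, fun d ⟨g, hg, hgass⟩ => ?_⟩
  rw [Ideal.colon_span] at hgass
  exact hmin g d hg hgass.isPrime

lemma vnumberAt_eq_of_forall_le (hf : f.IsHomogeneous D) (hfP : J.colon {f} = P)
    (hmin : ∀ (g : MvPolynomial σ K) d, g.IsHomogeneous d → J.colon {g} = P → D ≤ d) :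
    vnumberAt J P = D := by
  refine IsLeast.csInf_eq ⟨⟨f, hf, by rwa [Ideal.colon_span]⟩, fun d ⟨g, hg, hgP⟩ => ?_⟩
  rw [Ideal.colon_span] at hgP
  exact hmin g d hg hgP

end VNumber

namespace HeightTwoCI

open MvPolynomial
open Finsupp (weight)

variable {R : Type*} [CommRing R] {σ : Type*} {q l : ℕ}
  (x : Fin q → σ) (y : Fin l → σ) (α : ℕ) (β : Fin l → ℕ)

noncomputable def ideal : Ideal (MvPolynomial σ R) :=
  Ideal.span {monomial (∑ p, Finsupp.single (x p) α) 1,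
    monomial (∑ t, Finsupp.single (y t) (β t)) 1}

noncomputable def pairWeight (p : Fin q) (t : Fin l) : σ → ℕ :=
  ⇑(Finsupp.single (x p) (β t) + Finsupp.single (y t) α)

/-- `(x_1 ⋯ x_q) ^ (nα) * (y_1 ^ ⌈β_1/α⌉ ⋯ y_l ^ ⌈β_l/α⌉) / (x_{p₀} * y_{t₀})`. -/
noncomputable def witness (n : ℕ) (p₀ : Fin q) (t₀ : Fin l) : σ →₀ ℕ :=
  ∑ p, Finsupp.single (x p) (n * α - if p = p₀ then 1 else 0) +
    ∑ t, Finsupp.single (y t) (β t ⌈/⌉ α - if t = t₀ then 1 else 0)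

variable {x y α β}

lemma weight_pairWeight (p : Fin q) (t : Fin l) (e : σ →₀ ℕ) :
    weight (pairWeight x y α β p t) e = e (x p) * β t + e (y t) * α := by
  classical
  simp only [pairWeight, Finsupp.weight_apply, Finsupp.coe_add, Pi.add_apply, smul_eq_mul,
    mul_add, Finsupp.sum_add, Finsupp.single_apply, mul_ite, mul_zero, Finsupp.sum_ite_eq,
    Finsupp.mem_support_iff]
  split_ifs <;> simp_all

lemma witness_apply_left (hx : x.Injective) (hxy : ∀ p t, x p ≠ y t) {n : ℕ} {p₀ : Fin q}
    {t₀ : Fin l} (p : Fin q) :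
    witness x y α β n p₀ t₀ (x p) = n * α - if p = p₀ then 1 else 0 := by
  rw [witness, Finsupp.add_apply, Finsupp.sum_single_apply_self hx,
    Finsupp.sum_single_apply_of_forall_ne _ fun t => (hxy p t).symm, add_zero]

lemma witness_apply_right (hy : y.Injective) (hxy : ∀ p t, x p ≠ y t) {n : ℕ} {p₀ : Fin q}
    {t₀ : Fin l} (t : Fin l) :
    witness x y α β n p₀ t₀ (y t) = β t ⌈/⌉ α - if t = t₀ then 1 else 0 := by
  rw [witness, Finsupp.add_apply, Finsupp.sum_single_apply_self hy,
    Finsupp.sum_single_apply_of_forall_ne _ (hxy · t), zero_add]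

lemma degree_witness_add_two {n : ℕ} (hn : 0 < n) (hα : 0 < α) (hβ : ∀ t, 0 < β t)
    (p₀ : Fin q) (t₀ : Fin l) :
    (witness x y α β n p₀ t₀).degree + 2 = n * q * α + ∑ t, β t ⌈/⌉ α := by
  have hp := sum_tsub_ite_add_one (f := fun _ : Fin q => n * α) (i₀ := p₀) (Nat.mul_pos hn hα)
  have ht := sum_tsub_ite_add_one (f := fun t => β t ⌈/⌉ α) (pos_ceilDiv hα (hβ t₀))
  simp only [Finset.sum_const, Finset.card_univ, Fintype.card_fin, smul_eq_mul] at hp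
  simp only [witness, map_add, map_sum, Finsupp.degree_single]
  linarith [show n * q * α = q * (n * α) by ring]

/-- Let `X^u`, `X^v` be the generators of `I`, `p₀` minimise `e (x p)`, `i = min (e (x p₀)) (nα)`
and `j = nα - i`. Then `α • e` dominates `i • u + j • v`, so `(X^e)^α` is a multiple of
`(X^u)^i (X^v)^j ∈ I ^ (nα)`. -/
lemma monomial_pow_mem_ideal_pow (hq : 0 < q) (hx : x.Injective) (hy : y.Injective)
    (hxy : ∀ p t, x p ≠ y t) {n : ℕ} {e : σ →₀ ℕ}
    (he : ∀ p t, n * (α * β t) ≤ e (x p) * β t + e (y t) * α) :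
    monomial e (1 : R) ^ α ∈ ideal x y α β ^ (n * α) := by
  have : Nonempty (Fin q) := ⟨⟨0, hq⟩⟩
  obtain ⟨p₀, hp₀⟩ := Finite.exists_min fun p => e (x p)
  obtain ⟨i, j, hij, hi, hj⟩ : ∃ i j, i + j = n * α ∧ i ≤ e (x p₀) ∧
      ∀ t, j * β t ≤ e (y t) * α := by
    refine ⟨n * α - (n * α - e (x p₀)), n * α - e (x p₀), by omega, by omega, fun t => ?_⟩
    rw [Nat.sub_mul, tsub_le_iff_right, mul_assoc]
    linarith [he p₀ t]
  set u : σ →₀ ℕ := ∑ p, Finsupp.single (x p) α with hu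
  set v : σ →₀ ℕ := ∑ t, Finsupp.single (y t) (β t) with hv
  have hle : i • u + j • v ≤ α • e := by
    intro s
    simp only [Finsupp.add_apply, Finsupp.smul_apply, smul_eq_mul, hu, hv]
    by_cases hsx : ∃ p, x p = s
    · obtain ⟨p, rfl⟩ := hsx
      rw [Finsupp.sum_single_apply_self hx,
        Finsupp.sum_single_apply_of_forall_ne _ fun t => (hxy p t).symm, mul_zero, add_zero,
        mul_comm α]
      exact Nat.mul_le_mul_right α (hi.trans (hp₀ p))
    by_cases hsy : ∃ t, y t = s
    · obtain ⟨t, rfl⟩ := hsy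
      rw [Finsupp.sum_single_apply_self hy, Finsupp.sum_single_apply_of_forall_ne _ (hxy · t),
        mul_zero, zero_add, mul_comm α]
      exact hj t
    · push Not at hsx hsy
      simp [Finsupp.sum_single_apply_of_forall_ne _ hsx,
        Finsupp.sum_single_apply_of_forall_ne _ hsy]
  have hmem : monomial (i • u + j • v) (1 : R) ∈ ideal x y α β ^ (n * α) := by
    have hsplit : monomial (i • u + j • v) (1 : R) = monomial u 1 ^ i * monomial v 1 ^ j := by
      simp only [monomial_pow, one_pow, monomial_mul, mul_one]
    rw [hsplit, ← hij, pow_add]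
    exact Ideal.mul_mem_mul (Ideal.pow_mem_pow (Ideal.subset_span (by simp [hu])) _)
      (Ideal.pow_mem_pow (Ideal.subset_span (by simp [hv])) _)
  rw [monomial_pow, one_pow, ← tsub_add_cancel_of_le hle, ← one_mul (1 : R), ← monomial_mul]
  exact Ideal.mul_mem_left _ _ hmem

variable [IsDomain R] (x y α β)

/-- The integral closure of `⟨x_p ^ α, y_t ^ β_t⟩ ^ n`. -/
noncomputable def pairClosurePow (n : ℕ) (p : Fin q) (t : Fin l) : Ideal (MvPolynomial σ R) :=
  (weightedOrd (pairWeight x y α β p t)).geIdeal (n * (α * β t))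

noncomputable def closurePow (n : ℕ) : Ideal (MvPolynomial σ R) :=
  ⨅ p, ⨅ t, pairClosurePow x y α β n p t

noncomputable def pairPrime (p : Fin q) (t : Fin l) : Ideal (MvPolynomial σ R) :=
  (weightedOrd (pairWeight x y α β p t)).geIdeal 1

variable {x y α β}

instance isPrime_pairPrime {p : Fin q} {t : Fin l} : (pairPrime (R := R) x y α β p t).IsPrime :=
  AddValuation.isPrime_geIdeal_one

lemma mem_pairClosurePow_iff {n : ℕ} {p : Fin q} {t : Fin l} {f : MvPolynomial σ R} :
    f ∈ pairClosurePow x y α β n p t ↔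
      ∀ e ∈ f.support, n * (α * β t) ≤ e (x p) * β t + e (y t) * α := by
  simp only [pairClosurePow, AddValuation.mem_geIdeal, le_weightedOrd_iff, weight_pairWeight]

lemma closurePow_le_pairClosurePow {n : ℕ} (p : Fin q) (t : Fin l) :
    closurePow (R := R) x y α β n ≤ pairClosurePow x y α β n p t :=
  iInf₂_le (f := fun p t => pairClosurePow x y α β n p t) p t

lemma mem_closurePow_iff {n : ℕ} {f : MvPolynomial σ R} :
    f ∈ closurePow x y α β n ↔
      ∀ e ∈ f.support, ∀ p t, n * (α * β t) ≤ e (x p) * β t + e (y t) * α := by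
  simp only [closurePow, Ideal.mem_iInf, mem_pairClosurePow_iff]
  exact ⟨fun h e he p t => h p t e he, fun h p t e he => h e he p t⟩

lemma monomial_mem_closurePow_iff {n : ℕ} {e : σ →₀ ℕ} {a : R} (ha : a ≠ 0) :
    monomial e a ∈ closurePow x y α β n ↔
      ∀ p t, n * (α * β t) ≤ e (x p) * β t + e (y t) * α := by
  classical
  simp [mem_closurePow_iff, support_monomial, ha]

lemma X_pow_mem_pairClosurePow_left (hxy : ∀ p t, x p ≠ y t) (n : ℕ) (p : Fin q) (t : Fin l) :
    X (x p) ^ (n * α) ∈ pairClosurePow (R := R) x y α β n p t := by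
  classical
  simp [X_pow_eq_monomial, mem_pairClosurePow_iff, support_monomial, hxy p t, mul_assoc]

lemma X_pow_mem_pairClosurePow_right (hxy : ∀ p t, x p ≠ y t) (n : ℕ) (p : Fin q) (t : Fin l) :
    X (y t) ^ (n * β t) ∈ pairClosurePow (R := R) x y α β n p t := by
  classical
  simp [X_pow_eq_monomial, mem_pairClosurePow_iff, support_monomial, (hxy p t).symm, mul_comm α,
    mul_assoc]

lemma pairPrime_le_iff (hα : 0 < α) {p : Fin q} {t : Fin l} (hβ : 0 < β t)
    {Q : Ideal (MvPolynomial σ R)} :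
    pairPrime x y α β p t ≤ Q ↔ X (x p) ∈ Q ∧ X (y t) ∈ Q := by
  classical
  have hsupp : {s | pairWeight x y α β p t s ≠ 0} = {x p, y t} := by
    ext s
    simp only [pairWeight, Set.mem_ofPred_eq, Finsupp.coe_add, Pi.add_apply, Finsupp.single_apply]
    split_ifs <;> simp_all [eq_comm] <;> omega
  rw [pairPrime, geIdeal_one_weightedOrd, hsupp, Set.image_pair, Ideal.span_le,
    Set.insert_subset_iff, Set.singleton_subset_iff, SetLike.mem_coe, SetLike.mem_coe]

lemma colon_closurePow_le_pairPrime {n : ℕ} {p : Fin q} {t : Fin l} {f : MvPolynomial σ R}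
    (hf : f ∉ pairClosurePow x y α β n p t) :
    (closurePow x y α β n).colon {f} ≤ pairPrime x y α β p t :=
  (Submodule.colon_mono (closurePow_le_pairClosurePow p t) le_rfl).trans
    (AddValuation.colon_le_geIdeal_one hf)

lemma ideal_le_geIdeal (hx : x.Injective) (hy : y.Injective) (hxy : ∀ p t, x p ≠ y t)
    (p : Fin q) (t : Fin l) :
    ideal (R := R) x y α β ≤ (weightedOrd (pairWeight x y α β p t)).geIdeal (α * β t) := by
  simp only [ideal, Ideal.span_le, Set.insert_subset_iff, Set.singleton_subset_iff,
    SetLike.mem_coe, AddValuation.mem_geIdeal, weightedOrd_monomial _ _ one_ne_zero,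
    weight_pairWeight, Finsupp.sum_single_apply_self hx, Finsupp.sum_single_apply_self hy,
    Finsupp.sum_single_apply_of_forall_ne _ (hxy · t),
    Finsupp.sum_single_apply_of_forall_ne _ fun t => (hxy p t).symm]
  simp [mul_comm]

theorem intClosure_pow_ideal (hq : 0 < q) (hx : x.Injective) (hy : y.Injective)
    (hxy : ∀ p t, x p ≠ y t) (hα : 0 < α) (n : ℕ) :
    intClosure (ideal (R := R) x y α β ^ n) = closurePow x y α β n := by
  refine le_antisymm (le_iInf₂ fun p t => AddValuation.intClosure_le_geIdeal
    (AddValuation.pow_le_geIdeal (ideal_le_geIdeal hx hy hxy p t) n)) fun f hf => ?_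
  refine mem_of_forall_monomial_mem fun e he => mem_intClosure_of_pow_mem_pow hα ?_
  rw [← pow_mul]
  exact monomial_pow_mem_ideal_pow hq hx hy hxy (mem_closurePow_iff.1 hf e he)

lemma exists_eq_pairPrime (hxy : ∀ p t, x p ≠ y t) (hα : 0 < α) (hβ : ∀ t, 0 < β t) {n : ℕ}
    {f : MvPolynomial σ R} {Q : Ideal (MvPolynomial σ R)} (hQ : Q.IsPrime)
    (hQf : Q = ((closurePow x y α β n).colon {f}).radical) :
    ∃ p t, f ∉ pairClosurePow x y α β n p t ∧ Q = pairPrime x y α β p t := by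
  have hle : (closurePow x y α β n).colon {f} ≤ Q := hQf ▸ Ideal.le_radical
  simp only [closurePow, Submodule.iInf_colon] at hle
  obtain ⟨p, hp⟩ := hQ.exists_le_of_iInf_le hle
  obtain ⟨t, ht⟩ := hQ.exists_le_of_iInf_le hp
  have hf : f ∉ pairClosurePow x y α β n p t := fun hf => hQ.ne_top <| top_le_iff.1 <|
    ((Submodule.colon_eq_top_iff_subset _).2 (by simpa)).symm.trans_le ht
  refine ⟨p, t, hf, le_antisymm ?_ ?_⟩
  · rw [hQf]
    exact isPrime_pairPrime.radical_le_iff.2 (colon_closurePow_le_pairPrime hf)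
  · exact (pairPrime_le_iff hα (hβ t)).2
      ⟨hQ.mem_of_pow_mem _ (ht (Ideal.le_colon (X_pow_mem_pairClosurePow_left hxy n p t))),
        hQ.mem_of_pow_mem _ (ht (Ideal.le_colon (X_pow_mem_pairClosurePow_right hxy n p t)))⟩

lemma add_sum_ceilDiv_le_of_isPrime_colon (hql : q ≤ l) (hx : x.Injective) (hy : y.Injective)
    (hxy : ∀ p t, x p ≠ y t) (hα : 0 < α) (hαβ : ∀ t, α ≤ β t) {n d : ℕ}
    {f : MvPolynomial σ R} (hfd : f.IsHomogeneous d)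
    (hprime : ((closurePow x y α β n).colon {f}).IsPrime) :
    n * q * α + ∑ t, β t ⌈/⌉ α ≤ d + 2 := by
  classical
  have hβ t : 0 < β t := hα.trans_le (hαβ t)
  obtain ⟨p, t, hf, hP⟩ := exists_eq_pairPrime hxy hα hβ hprime hprime.radical.symm
  obtain ⟨hXf, hYf⟩ := (pairPrime_le_iff hα (hβ t)).1 hP.ge
  rw [Submodule.mem_colon_singleton, smul_eq_mul] at hXf hYf
  obtain ⟨e, he, hlt⟩ : ∃ e ∈ f.support, e (x p) * β t + e (y t) * α < n * (α * β t) := by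
    simpa [mem_pairClosurePow_iff] using hf
  have hXe := mem_closurePow_iff.1 hXf (Finsupp.single (x p) 1 + e)
    (by rwa [mem_support_iff, coeff_X_mul, ← mem_support_iff])
  have hYe := mem_closurePow_iff.1 hYf (Finsupp.single (y t) 1 + e)
    (by rwa [mem_support_iff, coeff_X_mul, ← mem_support_iff])
  calc n * q * α + ∑ t, β t ⌈/⌉ α ≤ ∑ p, e (x p) + ∑ t, e (y t) + 2 := by
        refine add_sum_ceilDiv_le hql hα hαβ hlt (fun p' hp' => ?_) (fun t' => ?_)
        · simpa [Finsupp.single_apply, hx.eq_iff, Ne.symm hp', hxy] using hXe p' t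
        · simpa [Finsupp.single_apply, hy.eq_iff, eq_comm, hxy p t, add_comm] using hYe p t'
    _ ≤ d + 2 := by
        rw [← hfd (mem_support_iff.1 he),
          show weight (1 : σ → ℕ) = Finsupp.degree from Finsupp.degree_eq_weight_one.symm]
        exact Nat.add_le_add_right
          (Finsupp.sum_apply_add_sum_apply_le_degree (hx.sumElim hy fun p t => hxy p t) e) 2

lemma colon_witness (hx : x.Injective) (hy : y.Injective) (hxy : ∀ p t, x p ≠ y t)
    {n : ℕ} (hn : 0 < n) (hα : 0 < α) (hαβ : ∀ t, α ≤ β t) (p₀ : Fin q) (t₀ : Fin l) :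
    (closurePow (R := R) x y α β n).colon {monomial (witness x y α β n p₀ t₀) 1} =
      pairPrime x y α β p₀ t₀ := by
  classical
  have hβ t : 0 < β t := hα.trans_le (hαβ t)
  have hnα : 0 < n * α := Nat.mul_pos hn hα
  refine le_antisymm (colon_closurePow_le_pairPrime ?_) ((pairPrime_le_iff hα (hβ t₀)).2 ?_)
  · simp only [mem_pairClosurePow_iff, support_monomial, one_ne_zero, if_false,
      Finset.mem_singleton, forall_eq, witness_apply_left hx hxy, witness_apply_right hy hxy,
      if_true, not_le]
    obtain ⟨m, hm⟩ : ∃ m, n * α = m + 1 := ⟨n * α - 1, by omega⟩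
    rw [← mul_assoc, hm, Nat.add_sub_cancel, mul_comm _ α]
    linarith [mul_ceilDiv_sub_one_lt hα (hβ t₀)]
  simp only [Submodule.mem_colon_singleton, smul_eq_mul, X, monomial_mul, one_mul,
    monomial_mem_closurePow_iff one_ne_zero]
  constructor <;> intro p t <;>
    simp only [Finsupp.add_apply, witness_apply_left hx hxy, witness_apply_right hy hxy,
      Finsupp.single_apply, hx.eq_iff, hy.eq_iff, hxy, (hxy _ _).symm, if_false, zero_add,
      @eq_comm _ p₀, @eq_comm _ t₀]
  · have h : (if p = p₀ then 1 else 0) + (n * α - if p = p₀ then 1 else 0) = n * α := by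
      split_ifs <;> omega
    rw [h, mul_assoc]
    exact Nat.le_add_right _ _
  · have hκ : 0 < β t ⌈/⌉ α := pos_ceilDiv hα (hβ t)
    have hκβ : β t ≤ α * (β t ⌈/⌉ α) := le_smul_ceilDiv hα
    have h₁ : (if t = t₀ then 1 else 0) + (β t ⌈/⌉ α - if t = t₀ then 1 else 0) = β t ⌈/⌉ α := by
      split_ifs <;> omega
    have h₂ : n * α ≤ (n * α - if p = p₀ then 1 else 0) + 1 := by
      split_ifs <;> omega
    rw [h₁]
    nlinarith [Nat.mul_le_mul_right (β t) h₂]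

end HeightTwoCI

open HeightTwoCI

theorem vnumber_intClosure_pow_ht_two_CI_general
    {K : Type*} [Field K] {σ : Type*} (q l : ℕ) (hq : 1 ≤ q) (hql : q ≤ l)
    (x : Fin q → σ) (y : Fin l → σ)
    (hx : Function.Injective x) (hy : Function.Injective y)
    (hxy : ∀ p t, x p ≠ y t)
    (α : ℕ) (hα : 1 ≤ α) (β : Fin l → ℕ) (hαβ : ∀ t, α ≤ β t)
    (I : Ideal (MvPolynomial σ K))
    (hI : I = Ideal.span
      {(monomial (∑ p, Finsupp.single (x p) α) 1 : MvPolynomial σ K),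
       (monomial (∑ t, Finsupp.single (y t) (β t)) 1 : MvPolynomial σ K)})
    (n : ℕ) (hn : 1 ≤ n)
    (P : Ideal (MvPolynomial σ K))
    (hPass : P ∈ associatedPrimes (MvPolynomial σ K)
      (MvPolynomial σ K ⧸ intClosure (I ^ n))) :
    vnumber (intClosure (I ^ n)) = vnumberAt (intClosure (I ^ n)) P ∧
    (vnumber (intClosure (I ^ n)) : ℤ)
      = (n : ℤ) * (q * α) + ∑ t, ⌈(β t : ℚ) / (α : ℚ)⌉ - 2 := by
  have hβ t : 0 < β t := lt_of_lt_of_le hα (hαβ t)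
  have hJ : intClosure (I ^ n) = closurePow x y α β n := hI ▸ intClosure_pow_ideal hq hx hy hxy hα n
  rw [hJ] at hPass ⊢
  obtain ⟨f, hPf⟩ := Ideal.exists_eq_radical_colon_of_mem_associatedPrimes hPass
  obtain ⟨p, t, -, rfl⟩ := exists_eq_pairPrime hxy hα hβ hPass.isPrime hPf
  have hD := degree_witness_add_two (x := x) (y := y) hn hα hβ p t
  have hcolon := colon_witness (R := K) hx hy hxy hn hα hαβ p t
  have hmin (g : MvPolynomial σ K) (d : ℕ) (hg : g.IsHomogeneous d)
      (hprime : ((closurePow x y α β n).colon {g}).IsPrime) :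
      (witness x y α β n p t).degree ≤ d := by
    linarith [add_sum_ceilDiv_le_of_isPrime_colon hql hx hy hxy hα hαβ hg hprime]
  have hv := vnumber_eq_of_forall_le (isHomogeneous_monomial _ rfl) (hcolon ▸ hPass) hmin
  have hvP := vnumberAt_eq_of_forall_le (isHomogeneous_monomial _ rfl) hcolon
    fun g d hg hgP => hmin g d hg (hgP ▸ hPass.isPrime)
  refine ⟨hv.trans hvP.symm, ?_⟩
  rw [hv, ← Finset.sum_congr rfl fun t _ => intCast_ceilDiv_eq_ceil hα (hβ t)]
  have hDℤ : ((witness x y α β n p t).degree : ℤ) + 2 =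
      n * q * α + ∑ t, ((β t ⌈/⌉ α : ℕ) : ℤ) := by exact_mod_cast hD
  linarith

/-- For the height-two complete intersection `I = ⟨(x_{i_1}⋯x_{i_q})^α, x_{j_1}^{β_1}⋯x_{j_l}^{β_l}⟩`
with `1 ≤ α ≤ β_1 ≤ ⋯ ≤ β_l`, `q ≤ l`, and all variables distinct: for every `n ≥ 1` and
every associated prime `P` of `closure(I^n)`,
`v(closure(I^n)) = v_P(closure(I^n)) = n·qα + ∑ⱼ ⌈βⱼ/α⌉ − 2`. -/
theorem vnumber_intClosure_pow_ht_two_CI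
    {K : Type*} [Field K] {σ : Type*} (q l : ℕ) (hq : 1 ≤ q) (hql : q ≤ l)
    (x : Fin q → σ) (y : Fin l → σ)
    (hx : Function.Injective x) (hy : Function.Injective y)
    (hxy : ∀ p t, x p ≠ y t)
    (α : ℕ) (hα : 1 ≤ α) (β : Fin l → ℕ) (hαβ : ∀ t, α ≤ β t) (hβmono : Monotone β)
    (I : Ideal (MvPolynomial σ K))
    (hI : I = Ideal.span
      {(monomial (∑ p, Finsupp.single (x p) α) 1 : MvPolynomial σ K),
       (monomial (∑ t, Finsupp.single (y t) (β t)) 1 : MvPolynomial σ K)})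
    (n : ℕ) (hn : 1 ≤ n)
    (P : Ideal (MvPolynomial σ K))
    (hPass : P ∈ associatedPrimes (MvPolynomial σ K)
      (MvPolynomial σ K ⧸ intClosure (I ^ n))) :
    vnumber (intClosure (I ^ n)) = vnumberAt (intClosure (I ^ n)) P ∧
    (vnumber (intClosure (I ^ n)) : ℤ)
      = (n : ℤ) * (q * α) + ∑ t, ⌈(β t : ℚ) / (α : ℚ)⌉ - 2 :=
  vnumber_intClosure_pow_ht_two_CI_general q l hq hql x y hx hy hxy α hα β hαβ I hI n hn P hPass
end
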